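/- arXiv:2601.14991 — 2 statements merged into one kernel-verified Lean document; each statement's English description precedes it below -/
import Mathlib

section
/- Let {X_n} be a sequence of random variables, X a random variable, and G a sub-σ-algebra. If for every ε > 0 the series ∑_{n=1}^∞ P(|X_n − X| > ε | G) is finite almost surely, then X_n → X almost surely. -/
open MeasureTheory ProbabilityTheory Filter
open scoped ENNReal

/-- If for every `ε > 0` the series of conditional probabilities
`∑ P(|Xₙ − X| > ε | G)` is a.s. finite, then `Xₙ → X` almost surely. -/
theorem ae_tendsto_of_summable_condexp {Ω : Type*} (mG : MeasurableSpace Ω) {m0 : MeasurableSpace Ω}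
    (μ : Measure Ω) [IsProbabilityMeasure μ]
    (hG : mG ≤ m0)
    (X : ℕ → Ω → ℝ) (X₀ : Ω → ℝ)
    (hX : ∀ n, Measurable (X n)) (hX₀ : Measurable X₀)
    (hsum : ∀ ε : ℝ, 0 < ε → ∀ᵐ ω ∂μ,
      Summable (fun n =>
        (μ[{ω' | ε < |X n ω' - X₀ ω'|}.indicator (fun _ => (1 : ℝ)) | mG]) ω)) :
    ∀ᵐ ω ∂μ, Tendsto (fun n => X n ω) atTop (nhds (X₀ ω)) := by
  have key : ∀ ε : ℝ, 0 < ε → ∀ᵐ ω ∂μ, ∀ᶠ n in atTop, |X n ω - X₀ ω| ≤ ε := by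
    intro ε hε
    set A : ℕ → Set Ω := fun n => {ω' | ε < |X n ω' - X₀ ω'|} with hA
    set f : ℕ → Ω → ℝ := fun n => μ[(A n).indicator (fun _ => (1:ℝ))|mG] with hf
    set B : ℕ → Set Ω := fun M => {ω | ∀ N, ∑ n ∈ Finset.range N, f n ω ≤ M} with hB
    have hBmG : ∀ M, MeasurableSet[mG] (B M) := by
      intro M
      have hBeq : B M = ⋂ N, {ω | ∑ n ∈ Finset.range N, f n ω ≤ M} := by
        ext ω; simp [hB, Set.mem_iInter]
      rw [hBeq]
      refine MeasurableSet.iInter fun N => ?_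
      refine measurableSet_le ?_ measurable_const
      exact Finset.measurable_sum _ fun n _ => stronglyMeasurable_condExp.measurable
    have hAnG : ∀ n, MeasurableSet[m0] (A n) := fun n =>
      measurableSet_lt measurable_const ((hX n).sub hX₀).abs
    letI : MeasurableSpace Ω := m0
    have hAn : ∀ n, MeasurableSet[m0] (A n) := fun n => hAnG n
    have hint : ∀ n, Integrable ((A n).indicator (fun _ => (1:ℝ))) μ := fun n =>
      (integrable_const (1:ℝ)).indicator (hAn n)
    have hf_int : ∀ n, Integrable (f n) μ := fun n => integrable_condExp
    have hf_nonneg : ∀ n, 0 ≤ᵐ[μ] f n := fun n =>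
      condExp_nonneg (Filter.Eventually.of_forall fun ω =>
        Set.indicator_nonneg (fun _ _ => zero_le_one) ω)
    have hBm : ∀ M, MeasurableSet[m0] (B M) := fun M => hG _ (hBmG M)
    have hnull : ∀ M : ℕ, μ (limsup A atTop ∩ B M) = 0 := by
      intro M
      have hfin : ∀ n, μ.restrict (B M) (A n) ≠ ⊤ := fun n =>
        (measure_lt_top _ _).ne
      have h1 : ∀ n, (μ.restrict (B M) (A n)).toReal = ∫ x in B M, f n x ∂μ := by
        intro n
        rw [hf, setIntegral_condExp hG (hint n) (hBmG M)]
        have h2 : ∫ x in B M, (A n).indicator (fun _ => (1:ℝ)) x ∂μ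
            = (μ.restrict (B M) (A n)).toReal • (1:ℝ) :=
          integral_indicator_const (μ := μ.restrict (B M)) (1:ℝ) (hAn n)
        simpa using h2.symm
      have hbound : ∀ N : ℕ, ∑ n ∈ Finset.range N, μ.restrict (B M) (A n)
          ≤ ENNReal.ofReal M := by
        intro N
        have hsum_toReal : (∑ n ∈ Finset.range N, μ.restrict (B M) (A n)).toReal
            = ∫ x in B M, (∑ n ∈ Finset.range N, f n x) ∂μ := by
          rw [ENNReal.toReal_sum (fun n _ => hfin n)]
          rw [integral_finset_sum _ (fun n _ => (hf_int n).integrableOn)]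
          exact Finset.sum_congr rfl fun n _ => h1 n
        have hle : ∫ x in B M, (∑ n ∈ Finset.range N, f n x) ∂μ ≤ (M : ℝ) := by
          have h2 : ∫ x in B M, (∑ n ∈ Finset.range N, f n x) ∂μ
              ≤ ∫ _ in B M, (M : ℝ) ∂μ := by
            refine setIntegral_mono_on
              (integrable_finset_sum _ fun n _ => hf_int n).integrableOn
              (integrableOn_const (measure_lt_top _ _).ne) (hBm M)
              fun x hx => hx N
          have h3 : ∫ _ in B M, (M : ℝ) ∂μ = (μ (B M)).toReal * M := by
            simp [smul_eq_mul, mul_comm, measureReal_def]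
          have h4 : (μ (B M)).toReal * (M : ℝ) ≤ 1 * M := by
            refine mul_le_mul_of_nonneg_right ?_ (Nat.cast_nonneg M)
            have h5 := prob_le_one (μ := μ) (s := B M)
            simpa using ENNReal.toReal_mono (by simp) h5
          calc ∫ x in B M, (∑ n ∈ Finset.range N, f n x) ∂μ
              ≤ ∫ _ in B M, (M : ℝ) ∂μ := h2
            _ = (μ (B M)).toReal * M := h3
            _ ≤ 1 * M := h4
            _ = M := one_mul _
        have hne : (∑ n ∈ Finset.range N, μ.restrict (B M) (A n)) ≠ ⊤ :=
          ENNReal.sum_ne_top.2 fun n _ => hfin n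
        rw [← ENNReal.ofReal_toReal hne]
        exact ENNReal.ofReal_le_ofReal (hsum_toReal ▸ hle)
      have htsum : ∑' n, μ.restrict (B M) (A n) ≠ ⊤ := by
        refine ne_top_of_le_ne_top (b := ENNReal.ofReal M) (by simp) ?_
        rw [ENNReal.tsum_eq_iSup_sum' (fun i => Finset.range i)
          (fun t => t.exists_nat_subset_range)]
        exact iSup_le hbound
      have hls := measure_limsup_atTop_eq_zero htsum
      rwa [Measure.restrict_apply (MeasurableSet.measurableSet_limsup hAn)] at hls
    have h2 : ∀ᵐ ω ∂μ, ∀ M : ℕ, ω ∉ limsup A atTop ∩ B M := by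
      rw [ae_all_iff]
      intro M
      exact measure_eq_zero_iff_ae_notMem.1 (hnull M)
    filter_upwards [ae_all_iff.2 hf_nonneg, hsum ε hε, h2] with ω hpos hsumω hM
    have hωB : ω ∈ B (⌈∑' n, f n ω⌉₊) := by
      intro N
      calc ∑ n ∈ Finset.range N, f n ω ≤ ∑' n, f n ω :=
            Summable.sum_le_tsum _ (fun n _ => hpos n) hsumω
        _ ≤ ⌈∑' n, f n ω⌉₊ := Nat.le_ceil _
    have hnot : ω ∉ limsup A atTop := fun h => hM _ ⟨h, hωB⟩
    rw [mem_limsup_iff_frequently_mem, not_frequently] at hnot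
    exact hnot.mono fun n hn => not_lt.1 hn
  have hkey : ∀ᵐ ω ∂μ, ∀ k : ℕ, ∀ᶠ n in atTop, |X n ω - X₀ ω| ≤ 1 / (k + 1) :=
    ae_all_iff.2 fun k => key (1 / (k + 1)) (by positivity)
  filter_upwards [hkey] with ω hω
  rw [Metric.tendsto_atTop]
  intro δ hδ
  obtain ⟨k, hk⟩ := exists_nat_one_div_lt hδ
  obtain ⟨N, hN⟩ := eventually_atTop.1 (hω k)
  exact ⟨N, fun n hn => lt_of_le_of_lt (by simpa [Real.dist_eq] using hN n hn) hk⟩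
end

section
/- Let W be Binomial(m, 1/n)-distributed with m ≤ n (the marginal of a uniform multinomial with m trials over n cells). For every real t, the moment generating function satisfies (E[e^{tW}] − 1)/E[W] ≤ t + (t²/2) e^{|t|} (1 + (e^{|t|} − 1)/n)^n (1 + e^{|t|} − 1/n). In particular, sup_n (E[e^{tW}] − 1)/E[W] is finite for each t, bounded by t + (t²/2) e^{|t| + e^{|t|} − 1}(1 + e^{|t|}) in the limit. -/
/-!
Pointwise, `exp x ≤ 1 + x + x² / 2 * exp |x|`: beyond its first two terms the exponential series
of `x` is dominated termwise by `x² / 2` times the series of `exp |x|`. Taking expectations, the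
remainder is `t² / 2 * E[W² u^W]` with `u = e^{|t|}`, and
`E[W² u^W] = ∑ k² C(m,k) (u/n)^k (1 - 1/n)^(m-k)` is evaluated exactly by the factorial-moment
identity `∑ C(m,k) C(k,j) a^k b^(m-k) = C(m,j) a^j (a+b)^(m-j)` for `j = 1, 2`. Then `m ≤ n`
bounds the resulting powers of `1 + (u - 1)/n` by the `n`-th one, and `(m - 1) u / n` by
`u - 1/n`.

`W` is not assumed measurable: its law is recovered from the fibre measures alone, since fibres
whose outer measures add up to `1` are all null-measurable.
-/

open MeasureTheory Real Finset

theorem Real.exp_le_one_add_add_sq_div_two_mul_exp_abs (x : ℝ) :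
    exp x ≤ 1 + x + x ^ 2 / 2 * exp |x| := by
  have hx : HasSum (fun k ↦ x ^ (k + 2) / (k + 2).factorial)
      (exp x - ∑ i ∈ range 2, x ^ i / i.factorial) := by
    rw [hasSum_nat_add_iff' (f := fun k ↦ x ^ k / k.factorial), exp_eq_exp_ℝ]
    exact NormedSpace.expSeries_div_hasSum_exp x
  have habs : HasSum (fun k ↦ x ^ 2 / 2 * (|x| ^ k / k.factorial)) (x ^ 2 / 2 * exp |x|) := by
    rw [exp_eq_exp_ℝ]
    exact (NormedSpace.expSeries_div_hasSum_exp |x|).mul_left _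
  have hterm (k : ℕ) : x ^ (k + 2) / (k + 2).factorial ≤ x ^ 2 / 2 * (|x| ^ k / k.factorial) := by
    have hfact : 2 * k.factorial ≤ (k + 2).factorial := by
      simpa [mul_comm] using
        Nat.le_of_dvd (Nat.factorial_pos _) (Nat.factorial_mul_factorial_dvd_factorial_add k 2)
    calc x ^ (k + 2) / (k + 2).factorial ≤ |x| ^ (k + 2) / (k + 2).factorial :=
          div_le_div_of_nonneg_right ((le_abs_self _).trans_eq (abs_pow x _)) (by positivity)
      _ ≤ |x| ^ (k + 2) / (2 * k.factorial) := by gcongr; exact_mod_cast hfact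
      _ = x ^ 2 / 2 * (|x| ^ k / k.factorial) := by rw [pow_add, sq_abs]; field_simp
  have hremainder := hasSum_le hterm hx habs
  norm_num [sum_range_succ] at hremainder
  linarith

theorem sum_range_choose_mul_choose_mul_pow_mul_pow {R : Type*} [CommSemiring R]
    (m j : ℕ) (a b : R) :
    ∑ k ∈ range (m + 1), (m.choose k * k.choose j : R) * a ^ k * b ^ (m - k)
      = m.choose j * a ^ j * (a + b) ^ (m - j) := by
  rcases lt_or_ge m j with hmj | hjm
  · rw [Nat.choose_eq_zero_of_lt hmj, Nat.cast_zero, zero_mul, zero_mul]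
    exact sum_eq_zero fun k hk ↦ by
      rw [Nat.choose_eq_zero_of_lt ((mem_range.1 hk).trans_le hmj)]; simp
  obtain ⟨r, rfl⟩ := Nat.exists_eq_add_of_le hjm
  have hlow : ∑ k ∈ range j, ((j + r).choose k * k.choose j : R) * a ^ k * b ^ (j + r - k) = 0 :=
    sum_eq_zero fun k hk ↦ by simp [Nat.choose_eq_zero_of_lt (mem_range.1 hk)]
  rw [add_assoc, sum_range_add, hlow, zero_add, Nat.add_sub_cancel_left, add_pow, mul_sum]
  refine sum_congr rfl fun i hi ↦ ?_
  have hi : i ≤ r := Nat.lt_succ_iff.1 (mem_range.1 hi)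
  rw [← Nat.cast_mul, Nat.choose_mul (Nat.le_add_right j i), Nat.add_sub_cancel_left,
    Nat.add_sub_cancel_left, show j + r - (j + i) = r - i by omega]
  push_cast
  ring

theorem sum_range_choose_mul_pow_mul_pow (m : ℕ) (a b : ℝ) :
    ∑ k ∈ range (m + 1), m.choose k * a ^ k * b ^ (m - k) = (a + b) ^ m := by
  rw [add_pow]
  exact sum_congr rfl fun k _ ↦ by ring

theorem sum_range_choose_mul_pow_mul_pow_mul_cast (m : ℕ) (a b : ℝ) :
    ∑ k ∈ range (m + 1), m.choose k * a ^ k * b ^ (m - k) * k = m * a * (a + b) ^ (m - 1) := by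
  have h1 := sum_range_choose_mul_choose_mul_pow_mul_pow m 1 a b
  simp only [Nat.choose_one_right, pow_one] at h1
  rw [← h1]
  exact sum_congr rfl fun k _ ↦ by ring

theorem sum_range_choose_mul_pow_mul_pow_mul_cast_sq (m : ℕ) (a b : ℝ) :
    ∑ k ∈ range (m + 1), m.choose k * a ^ k * b ^ (m - k) * k ^ 2
      = m * (m - 1) * a ^ 2 * (a + b) ^ (m - 2) + m * a * (a + b) ^ (m - 1) := by
  have h2 := sum_range_choose_mul_choose_mul_pow_mul_pow m 2 a b
  simp only [Nat.cast_choose_two] at h2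
  calc ∑ k ∈ range (m + 1), m.choose k * a ^ k * b ^ (m - k) * k ^ 2
      = 2 * ∑ k ∈ range (m + 1), m.choose k * (k * (k - 1) / 2) * a ^ k * b ^ (m - k)
          + ∑ k ∈ range (m + 1), m.choose k * a ^ k * b ^ (m - k) * k := by
        rw [mul_sum, ← sum_add_distrib]
        exact sum_congr rfl fun k _ ↦ by ring
    _ = _ := by rw [h2, sum_range_choose_mul_pow_mul_pow_mul_cast]; ring

section Law

variable {Ω α : Type*} [MeasurableSpace Ω] {μ : Measure Ω}

theorem MeasureTheory.nullMeasurableSet_of_measure_add_measure_compl_le [IsFiniteMeasure μ]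
    {s : Set Ω} (h : μ s + μ sᶜ ≤ μ Set.univ) : NullMeasurableSet s μ := by
  set t := toMeasurable μ s
  set u := toMeasurable μ sᶜ
  have hcover : t ∪ u = Set.univ := Set.univ_subset_iff.1 <|
    (Set.union_compl_self s).symm.subset.trans <|
      Set.union_subset_union (subset_toMeasurable μ s) (subset_toMeasurable μ sᶜ)
  have hinter : μ (t ∩ u) = 0 := by
    have h' := measure_union_add_inter (μ := μ) t (measurableSet_toMeasurable μ sᶜ)
    rw [hcover, measure_toMeasurable, measure_toMeasurable] at h'
    exact nonpos_iff_eq_zero.1 <| ENNReal.le_of_add_le_add_left (measure_ne_top μ Set.univ) <|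
      by rw [h', add_zero]; exact h
  refine (measurableSet_toMeasurable μ s).nullMeasurableSet.congr (ae_eq_set.2 ⟨?_, ?_⟩)
  · exact measure_mono_null (show t \ s ⊆ t ∩ u from
      fun ω hω ↦ ⟨hω.1, subset_toMeasurable μ sᶜ hω.2⟩) hinter
  · rw [Set.sdiff_eq_empty.2 (subset_toMeasurable μ s), measure_empty]

variable [MeasurableSpace α] [Countable α] [MeasurableSingletonClass α]

open scoped Classical in
theorem MeasureTheory.aemeasurable_of_tsum_measure_preimage_singleton_le [IsFiniteMeasure μ]
    {X : Ω → α} (h : ∑' a, μ (X ⁻¹' {a}) ≤ μ Set.univ) : AEMeasurable X μ := by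
  have hfiber (a : α) : NullMeasurableSet (X ⁻¹' {a}) μ := by
    refine nullMeasurableSet_of_measure_add_measure_compl_le ?_
    have hcompl : (X ⁻¹' {a})ᶜ ⊆ ⋃ b, if b = a then ∅ else X ⁻¹' {b} := fun ω hω ↦
      Set.mem_iUnion.2 ⟨X ω, by simpa [if_neg hω] using hω⟩
    calc μ (X ⁻¹' {a}) + μ (X ⁻¹' {a})ᶜ
        ≤ μ (X ⁻¹' {a}) + ∑' b, if b = a then 0 else μ (X ⁻¹' {b}) := by
          gcongr
          refine (measure_mono hcompl).trans <|
            (measure_iUnion_le _).trans_eq (tsum_congr fun b ↦ ?_)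
          split_ifs <;> simp
      _ = ∑' b, μ (X ⁻¹' {b}) :=
          (ENNReal.tsum_eq_add_tsum_ite (f := fun b ↦ μ (X ⁻¹' {b})) a).symm
      _ ≤ μ Set.univ := h
  refine NullMeasurable.aemeasurable fun S _ ↦ ?_
  rw [← Set.biUnion_preimage_singleton]
  exact .biUnion S.to_countable fun a _ ↦ hfiber a

theorem MeasureTheory.integral_comp_eq_sum_measureReal_preimage_singleton [IsFiniteMeasure μ]
    {X : Ω → α} (hX : AEMeasurable X μ) (s : Finset α) (hs : ∀ a ∉ s, μ (X ⁻¹' {a}) = 0)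
    (f : α → ℝ) : ∫ ω, f (X ω) ∂μ = ∑ a ∈ s, μ.real (X ⁻¹' {a}) * f a := by
  classical
  have hlaw : μ.map X = ∑ a ∈ s, μ (X ⁻¹' {a}) • Measure.dirac a := by
    refine Measure.ext_of_singleton fun b ↦ ?_
    rw [Measure.map_apply_of_aemeasurable hX (measurableSet_singleton b), Measure.finsetSum_apply]
    simp only [Measure.smul_apply, Measure.dirac_apply' _ (measurableSet_singleton b),
      Set.indicator_apply, Set.mem_singleton_iff, Pi.one_apply, smul_eq_mul, mul_ite, mul_one,
      mul_zero, sum_ite_eq']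
    split_ifs with hb
    · rfl
    · exact hs b hb
  rw [← integral_map hX (measurable_of_countable f).aestronglyMeasurable, hlaw,
    integral_finsetSum_measure fun a _ ↦
      (integrable_dirac (by simp)).smul_measure (measure_ne_top μ _)]
  simp [integral_smul_measure, measureReal_def]

theorem integral_comp_eq_sum_of_binomial_law [IsProbabilityMeasure μ] {m : ℕ} {q : ℝ}
    (hq0 : 0 ≤ q) (hq1 : q ≤ 1) {W : Ω → ℕ}
    (hW : ∀ k : ℕ, μ {ω | W ω = k} = ENNReal.ofReal (m.choose k * q ^ k * (1 - q) ^ (m - k)))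
    (f : ℕ → ℝ) :
    ∫ ω, f (W ω) ∂μ = ∑ k ∈ range (m + 1), m.choose k * q ^ k * (1 - q) ^ (m - k) * f k := by
  have hp0 (k : ℕ) : 0 ≤ (m.choose k : ℝ) * q ^ k * (1 - q) ^ (m - k) := by
    have := sub_nonneg.2 hq1; positivity
  have hout : ∀ k ∉ range (m + 1), (m.choose k : ℝ) * q ^ k * (1 - q) ^ (m - k) = 0 :=
    fun k hk ↦ by
      rw [Nat.choose_eq_zero_of_lt (by simpa using hk), Nat.cast_zero, zero_mul, zero_mul]
  have htotal : ∑ k ∈ range (m + 1), (m.choose k : ℝ) * q ^ k * (1 - q) ^ (m - k) = 1 := by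
    rw [sum_range_choose_mul_pow_mul_pow, add_sub_cancel, one_pow]
  have hW' (k : ℕ) : μ (W ⁻¹' {k}) = ENNReal.ofReal (m.choose k * q ^ k * (1 - q) ^ (m - k)) :=
    hW k
  have hX : AEMeasurable W μ := by
    refine aemeasurable_of_tsum_measure_preimage_singleton_le (le_of_eq ?_)
    simp_rw [hW', measure_univ]
    rw [tsum_eq_sum (s := range (m + 1)) fun k hk ↦ by rw [hout k hk, ENNReal.ofReal_zero],
      ← ENNReal.ofReal_sum_of_nonneg fun k _ ↦ hp0 k, htotal, ENNReal.ofReal_one]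
  rw [integral_comp_eq_sum_measureReal_preimage_singleton hX (range (m + 1))
    fun k hk ↦ by rw [hW', hout k hk, ENNReal.ofReal_zero]]
  exact sum_congr rfl fun k _ ↦ by rw [measureReal_def, hW', ENNReal.toReal_ofReal (hp0 k)]

end Law

theorem sum_range_choose_mul_pow_mul_pow_mul_exp_le (m : ℕ) {a b : ℝ} (ha : 0 ≤ a) (hb : 0 ≤ b)
    (t : ℝ) :
    ∑ k ∈ range (m + 1), m.choose k * a ^ k * b ^ (m - k) * exp (t * k)
      ≤ (a + b) ^ m + t * (m * a * (a + b) ^ (m - 1)) + t ^ 2 / 2 *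
        (m * (m - 1) * (a * exp |t|) ^ 2 * (a * exp |t| + b) ^ (m - 2)
          + m * (a * exp |t|) * (a * exp |t| + b) ^ (m - 1)) := by
  have hterm (k : ℕ) : m.choose k * a ^ k * b ^ (m - k) * exp (t * k)
      ≤ m.choose k * a ^ k * b ^ (m - k) + t * (m.choose k * a ^ k * b ^ (m - k) * k)
        + t ^ 2 / 2 * (m.choose k * (a * exp |t|) ^ k * b ^ (m - k) * k ^ 2) := by
    have hexp := exp_le_one_add_add_sq_div_two_mul_exp_abs (t * k)
    rw [abs_mul, Nat.abs_cast, mul_comm |t|, exp_nat_mul] at hexp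
    calc _ ≤ m.choose k * a ^ k * b ^ (m - k) * (1 + t * k + (t * k) ^ 2 / 2 * exp |t| ^ k) :=
          mul_le_mul_of_nonneg_left hexp (by positivity)
      _ = _ := by ring
  calc _ ≤ _ := sum_le_sum fun k _ ↦ hterm k
    _ = _ := by
      rw [sum_add_distrib, sum_add_distrib, ← mul_sum, ← mul_sum,
        sum_range_choose_mul_pow_mul_pow, sum_range_choose_mul_pow_mul_pow_mul_cast,
        sum_range_choose_mul_pow_mul_pow_mul_cast_sq]

-- The left side is `∑ k, k ^ 2 * C(m, k) * (u / n) ^ k * (1 - 1 / n) ^ (m - k)`.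
theorem binomial_second_moment_le {m n : ℕ} (hm : 1 ≤ m) (hmn : m ≤ n) {u : ℝ} (hu : 1 ≤ u) :
    m * (m - 1) * (u / n) ^ 2 * (1 + (u - 1) / n) ^ (m - 2)
        + m * (u / n) * (1 + (u - 1) / n) ^ (m - 1)
      ≤ m / n * (u * (1 + (u - 1) / n) ^ n * (1 + u - 1 / n)) := by
  have hn : (1 : ℝ) ≤ n := by exact_mod_cast hm.trans hmn
  have hmn' : (m : ℝ) ≤ n := by exact_mod_cast hmn
  set s := 1 + (u - 1) / n
  have hs : 1 ≤ s := le_add_of_nonneg_right (div_nonneg (by linarith) (by linarith))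
  have hcoef : (m - 1) * (u / n) ≤ u - 1 / n :=
    calc (m - 1) * (u / n) = (m - 1) * u / n := by ring
      _ ≤ (n * u - 1) / n := by gcongr; nlinarith
      _ = u - 1 / n := by field_simp
  have hcoef_nonneg : 0 ≤ u - 1 / n := by
    linarith [show (1 : ℝ) / n ≤ 1 from div_le_one_of_le₀ hn (by linarith)]
  have hpow₁ : s ^ (m - 1) ≤ s ^ n := pow_le_pow_right₀ hs (by omega)
  have hpow₂ : s ^ (m - 2) ≤ s ^ n := pow_le_pow_right₀ hs (by omega)
  calc _ = m / n * u * ((m - 1) * (u / n) * s ^ (m - 2) + s ^ (m - 1)) := by ring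
    _ ≤ m / n * u * ((u - 1 / n) * s ^ n + s ^ n) := by gcongr
    _ = _ := by ring

theorem binomial_mgf_bound_general {Ω : Type*} [MeasurableSpace Ω]
    (μ : Measure Ω) [IsProbabilityMeasure μ]
    (n m : ℕ) (hm1 : 1 ≤ m) (hmn : m ≤ n)
    (W : Ω → ℕ)
    (hW : ∀ k : ℕ, μ {ω | W ω = k}
      = ENNReal.ofReal ((m.choose k : ℝ) * (1 / n) ^ k * (1 - 1 / n) ^ (m - k)))
    (t : ℝ) :
    ((∫ ω, Real.exp (t * (W ω : ℝ)) ∂μ) - 1) / (∫ ω, (W ω : ℝ) ∂μ)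
      ≤ t + t ^ 2 / 2 * Real.exp |t| * (1 + (Real.exp |t| - 1) / n) ^ n
          * (1 + Real.exp |t| - 1 / n) := by
  have hn : (0 : ℝ) < n := Nat.cast_pos.2 (by omega)
  have hq0 : (0 : ℝ) ≤ 1 / n := by positivity
  have hq1 : (1 : ℝ) / n ≤ 1 := div_le_one_of_le₀ (by exact_mod_cast hm1.trans hmn) hn.le
  have hlaw := integral_comp_eq_sum_of_binomial_law hq0 hq1 hW
  have hmean : ∫ ω, (W ω : ℝ) ∂μ = m / n := by
    rw [hlaw, sum_range_choose_mul_pow_mul_pow_mul_cast, add_sub_cancel, one_pow, mul_one,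
      mul_one_div]
  have hmgf := sum_range_choose_mul_pow_mul_pow_mul_exp_le m hq0 (sub_nonneg.2 hq1) t
  rw [add_sub_cancel, one_pow, one_pow, mul_one, one_div_mul_eq_div,
    show exp |t| / n + (1 - 1 / n) = 1 + (exp |t| - 1) / n by ring] at hmgf
  have hsecond := binomial_second_moment_le hm1 hmn (one_le_exp (abs_nonneg t))
  rw [hmean, hlaw fun k ↦ exp (t * k), div_le_iff₀ (by positivity)]
  have ht : (0 : ℝ) ≤ t ^ 2 / 2 := by positivity
  linear_combination hmgf + mul_le_mul_of_nonneg_left hsecond ht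

/-- For `W ~ Bin(m, 1/n)` with `1 ≤ m ≤ n`, the moment generating function
satisfies `(E[e^{tW}] − 1)/E[W] ≤ t + (t²/2)e^{|t|}(1 + (e^{|t|} − 1)/n)^n
(1 + e^{|t|} − 1/n)` for every real `t`. -/
theorem binomial_mgf_bound {Ω : Type*} [MeasurableSpace Ω]
    (μ : Measure Ω) [IsProbabilityMeasure μ]
    (n m : ℕ) (hm1 : 1 ≤ m) (hmn : m ≤ n)
    (W : Ω → ℕ) (hWle : ∀ ω, W ω ≤ m)
    (hW : ∀ k : ℕ, μ {ω | W ω = k}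
      = ENNReal.ofReal ((m.choose k : ℝ) * (1 / n) ^ k * (1 - 1 / n) ^ (m - k)))
    (t : ℝ) :
    ((∫ ω, Real.exp (t * (W ω : ℝ)) ∂μ) - 1) / (∫ ω, (W ω : ℝ) ∂μ)
      ≤ t + t ^ 2 / 2 * Real.exp |t| * (1 + (Real.exp |t| - 1) / n) ^ n
          * (1 + Real.exp |t| - 1 / n) :=
  binomial_mgf_bound_general μ n m hm1 hmn W hW t
end
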